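/- arXiv:1104.1330 — 4 statements merged into one kernel-verified Lean document; each statement's English description precedes it below -/
import Mathlib

section
/- Guards lemma: Let e be a link with receiver r_e, and let L be a finite set of links such that every e' ∈ L satisfies d_{e'} ≤ d_{e'e} (where d_{e'} is the length of e' and d_{e'e} the distance from the transmitter of e' to r_e). Then there exists a set G of at most six receivers of links in L such that for every e' ∈ L there is g ∈ G with dist(s_{e'}, g) ≤ 2·d_{e'e}. -/
/-!
Cut the plane around `re` into six 60° sectors and, in every non-empty sector, keep the link whose
transmitter is nearest to `re`. Two vectors whose angle is at most `π / 3` are at distance at most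
the larger of their norms (law of cosines), so a transmitter `s e'` is within `dist (s e') re` of
the kept transmitter `s eⱼ` of its sector, and the triangle inequality through `s eⱼ`, together with
`d_{eⱼ} ≤ d_{eⱼ e} ≤ d_{e' e}`, puts `r eⱼ` within `2 * dist (s e') re` of `s e'`.
-/

open Finset InnerProductGeometry Real

theorem Finset.exists_subset_card_le_card_image_forall_exists_le {ι κ α : Type*} [DecidableEq κ]
    [LinearOrder α] (L : Finset ι) (σ : ι → κ) (d : ι → α) :
    ∃ T ⊆ L, T.card ≤ (L.image σ).card ∧ ∀ e ∈ L, ∃ t ∈ T, σ t = σ e ∧ d t ≤ d e := by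
  classical
  have hmin : ∀ k ∈ L.image σ, ∃ m ∈ L.filter (σ · = k), ∀ e ∈ L.filter (σ · = k), d m ≤ d e := by
    intro k hk
    obtain ⟨e, he, rfl⟩ := mem_image.1 hk
    exact exists_min_image _ d ⟨e, mem_filter.2 ⟨he, rfl⟩⟩
  choose m hmL hmin using hmin
  refine ⟨(L.image σ).attach.image fun k => m k.1 k.2, ?_, ?_, ?_⟩
  · intro t ht
    obtain ⟨⟨k, hk⟩, -, rfl⟩ := mem_image.1 ht
    exact (mem_filter.1 (hmL k hk)).1
  · exact card_image_le.trans card_attach.le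
  · intro e he
    have hk := mem_image_of_mem σ he
    exact ⟨m _ hk, mem_image_of_mem _ (mem_attach _ ⟨_, hk⟩), (mem_filter.1 (hmL _ hk)).2,
      hmin _ hk e (mem_filter.2 ⟨he, rfl⟩)⟩

theorem InnerProductGeometry.norm_sub_le_max_of_angle_le {V : Type*} [NormedAddCommGroup V]
    [InnerProductSpace ℝ V] {x y : V} (h : angle x y ≤ π / 3) : ‖x - y‖ ≤ max ‖x‖ ‖y‖ := by
  have hcos : 1 / 2 ≤ cos (angle x y) := by
    rw [← cos_pi_div_three]
    exact cos_le_cos_of_nonneg_of_le_pi (angle_nonneg x y) (by linarith [pi_pos]) h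
  have hsq := norm_sub_sq_eq_norm_sq_add_norm_sq_sub_two_mul_norm_mul_norm_mul_cos_angle x y
  have hxy : 0 ≤ ‖x‖ * ‖y‖ := by positivity
  refine (pow_le_pow_iff_left₀ (norm_nonneg _) (by positivity) two_ne_zero).1 ?_
  rcases le_total ‖x‖ ‖y‖ with hle | hle
  · rw [max_eq_right hle]; nlinarith [mul_le_mul_of_nonneg_left hle (norm_nonneg x)]
  · rw [max_eq_left hle]; nlinarith [mul_le_mul_of_nonneg_left hle (norm_nonneg y)]

theorem Complex.angle_eq_abs_arg_sub {x y : ℂ} (hx : x ≠ 0) (hy : y ≠ 0)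
    (h : |arg x - arg y| < π) : angle x y = |arg x - arg y| := by
  rw [angle_eq_abs_arg hx hy, ← arg_coe_angle_toReal_eq_arg, arg_div_coe_angle hx hy,
    ← Real.Angle.coe_sub, Real.Angle.toReal_coe_eq_self_iff.2]
  exact ⟨(neg_lt_of_abs_lt h), (le_of_abs_le h.le)⟩

/-- The sextant `k ∈ {-2, …, 3}` is the wedge `(k - 1) π / 3 < arg z ≤ k π / 3`. -/
noncomputable def Complex.sextant (z : ℂ) : ℤ := ⌈arg z / (π / 3)⌉

theorem Complex.sextant_mem_Icc (z : ℂ) : sextant z ∈ Icc (-2) 3 := by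
  have h3 : (0 : ℝ) < π / 3 := by positivity
  rw [mem_Icc, sextant, Int.le_ceil_iff, Int.ceil_le, lt_div_iff₀ h3, div_le_iff₀ h3]
  constructor
  · push_cast; linarith [neg_pi_lt_arg z]
  · push_cast; linarith [arg_le_pi z]

theorem Complex.abs_arg_sub_lt_of_sextant_eq {z w : ℂ} (h : sextant z = sextant w) :
    |arg z - arg w| < π / 3 := by
  have h3 : (0 : ℝ) < π / 3 := by positivity
  have hfloor : ⌊-(arg z / (π / 3))⌋ = ⌊-(arg w / (π / 3))⌋ := by
    rw [Int.floor_neg, Int.floor_neg]; exact congrArg Neg.neg h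
  have := Int.abs_sub_lt_one_of_floor_eq_floor hfloor
  rwa [neg_sub_neg, abs_sub_comm, ← sub_div, abs_div, abs_of_pos h3, div_lt_one h3] at this

theorem Complex.norm_sub_le_max_of_sextant_eq {z w : ℂ} (h : sextant z = sextant w) :
    ‖z - w‖ ≤ max ‖z‖ ‖w‖ := by
  rcases eq_or_ne z 0 with rfl | hz
  · simp
  rcases eq_or_ne w 0 with rfl | hw
  · simp
  have harg := abs_arg_sub_lt_of_sextant_eq h
  refine norm_sub_le_max_of_angle_le ?_
  rw [angle_eq_abs_arg_sub hz hw (by linarith [pi_pos])]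
  exact harg.le

theorem guards_lemma_general {ι : Type*}
    (L : Finset ι)
    (s r : ι → EuclideanSpace ℝ (Fin 2))
    (re : EuclideanSpace ℝ (Fin 2))
    (hshort : ∀ e' ∈ L, dist (s e') (r e') ≤ dist (s e') re) :
    ∃ G : Finset (EuclideanSpace ℝ (Fin 2)),
      G.card ≤ 6 ∧
      (∀ g ∈ G, ∃ e' ∈ L, g = r e') ∧
      (∀ e' ∈ L, ∃ g ∈ G, dist (s e') g ≤ 2 * dist (s e') re) := by
  classical
  let f : EuclideanSpace ℝ (Fin 2) ≃ₗᵢ[ℝ] ℂ := Complex.orthonormalBasisOneI.repr.symm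
  obtain ⟨T, hTL, hTcard, hT⟩ := exists_subset_card_le_card_image_forall_exists_le L
    (fun e => Complex.sextant (f (s e - re))) (fun e => dist (s e) re)
  refine ⟨T.image r, ?_, ?_, ?_⟩
  · calc (T.image r).card ≤ T.card := card_image_le
      _ ≤ (Icc (-2 : ℤ) 3).card :=
          hTcard.trans (card_le_card (image_subset_iff.2 fun e _ => Complex.sextant_mem_Icc _))
      _ = 6 := rfl
  · intro g hg
    obtain ⟨t, ht, rfl⟩ := mem_image.1 hg
    exact ⟨t, hTL ht, rfl⟩
  · intro e he
    obtain ⟨t, ht, hsextant, hnearer⟩ := hT e he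
    have hclose : dist (s e) (s t) ≤ dist (s e) re := by
      have := Complex.norm_sub_le_max_of_sextant_eq hsextant.symm
      rw [← map_sub, f.norm_map, f.norm_map, f.norm_map, sub_sub_sub_cancel_right,
        ← dist_eq_norm, ← dist_eq_norm, ← dist_eq_norm] at this
      exact this.trans (max_le le_rfl hnearer)
    refine ⟨r t, mem_image_of_mem r ht, ?_⟩
    calc dist (s e) (r t) ≤ dist (s e) (s t) + dist (s t) (r t) := dist_triangle _ _ _
      _ ≤ dist (s e) re + dist (s t) re := add_le_add hclose (hshort t (hTL ht))
      _ ≤ 2 * dist (s e) re := by linarith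

theorem guards_lemma {ι : Type*} [DecidableEq ι]
    (L : Finset ι)
    (s r : ι → EuclideanSpace ℝ (Fin 2))
    (re : EuclideanSpace ℝ (Fin 2))
    (hshort : ∀ e' ∈ L, dist (s e') (r e') ≤ dist (s e') re) :
    ∃ G : Finset (EuclideanSpace ℝ (Fin 2)),
      G.card ≤ 6 ∧
      (∀ g ∈ G, ∃ e' ∈ L, g = r e') ∧
      (∀ e' ∈ L, ∃ g ∈ G, dist (s e') g ≤ 2 * dist (s e') re) :=
  guards_lemma_general L s r re hshort
end

section
/- Greedy multi-coloring lemma: Let V be a finite set with a weight function w : V × V → [0,1], demands x : V → [0,1], and an injective length function d : V → ℝ. Assume for all u ∈ V: x(u) + Σ_{v : d(v) > d(u)} w(v,u)·x(v) ≤ 1. Then for every positive integer T there exists a multi-coloring π : V → Finset(Fin T) such that (1) for every color c and every u with c ∈ π(u), Σ_{v : d(v) > d(u), c ∈ π(v)} w(v,u) ≤ 1, and (2) |π(u)| ≥ ⌊x(u)·T⌋ for every u. -/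
/-!
Colour the vertices greedily in order of decreasing `d`, giving each vertex `u` exactly
`⌊x u * T⌋` colours. When `u` is reached, every longer vertex `v` already holds at most
`x v * T` colours, so the loads `L c` that the colours `c` place on `u` sum to at most
`T * ∑ w v u * x v ≤ (1 - x u) * T`. By Markov's inequality at most `(1 - x u) * T`
colours have load above `1`, which leaves at least `x u * T` colours free for `u`.
-/

open Finset

section Counting

variable {α : Type*} [Fintype α]

theorem card_sub_sum_le_card_filter_le_one {L : α → ℝ} (hL : ∀ c, 0 ≤ L c) :
    (Fintype.card α : ℝ) - ∑ c, L c ≤ #{c | L c ≤ 1} := by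
  have hMarkov : (#{c | ¬L c ≤ 1} : ℝ) ≤ ∑ c, L c :=
    calc (#{c | ¬L c ≤ 1} : ℝ) = ∑ c with ¬L c ≤ 1, (1 : ℝ) := by simp
      _ ≤ ∑ c with ¬L c ≤ 1, L c :=
        sum_le_sum fun c hc => (not_le.mp (mem_filter.mp hc).2).le
      _ ≤ ∑ c, L c := sum_le_sum_of_subset_of_nonneg (subset_univ _) fun c _ _ => hL c
  have hsplit := card_filter_add_card_filter_not (s := univ) (fun c => L c ≤ 1)
  rw [card_univ] at hsplit
  rw [← hsplit, Nat.cast_add]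
  linarith

theorem exists_card_eq_forall_le_one {L : α → ℝ} (hL : ∀ c, 0 ≤ L c) {m : ℕ}
    (hm : (m : ℝ) + ∑ c, L c ≤ Fintype.card α) :
    ∃ S : Finset α, #S = m ∧ ∀ c ∈ S, L c ≤ 1 := by
  have hfree : m ≤ #{c | L c ≤ 1} := by
    have := card_sub_sum_le_card_filter_le_one hL
    exact_mod_cast (show (m : ℝ) ≤ #{c | L c ≤ 1} by linarith)
  obtain ⟨S, hS, hcard⟩ := exists_subset_card_eq hfree
  exact ⟨S, hcard, fun c hc => (mem_filter.mp (hS hc)).2⟩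

theorem sum_sum_filter_mem_eq_sum_card_mul {β R : Type*} [DecidableEq α] [Semiring R]
    (s : Finset β) (π : β → Finset α) (f : β → R) :
    ∑ c, ∑ v ∈ s with c ∈ π v, f v = ∑ v ∈ s, #(π v) * f v := by
  simp only [sum_filter]
  rw [sum_comm]
  refine sum_congr rfl fun v _ => ?_
  rw [sum_ite_mem, univ_inter, sum_const, nsmul_eq_mul]

end Counting

section Greedy

variable {ι κ : Type*} [DecidableEq κ]

def IsFeasibleOn (w : ι → ι → ℝ) (d : ι → ℝ) (s : Finset ι) (π : ι → Finset κ) : Prop :=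
  ∀ u ∈ s, ∀ c ∈ π u, ∑ v ∈ s with d u < d v ∧ c ∈ π v, w v u ≤ 1

variable {w : ι → ι → ℝ} {x d : ι → ℝ}

theorem sum_filter_insert_update_of_le [DecidableEq ι] {s : Finset ι} {a u : ι} (ha : a ∉ s)
    (hau : d a ≤ d u) (π : ι → Finset κ) (S : Finset κ) (c : κ) :
    ∑ v ∈ insert a s with d u < d v ∧ c ∈ Function.update π a S v, w v u
      = ∑ v ∈ s with d u < d v ∧ c ∈ π v, w v u := by
  rw [filter_insert, if_neg fun h => (not_lt.mpr hau) h.1]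
  refine sum_congr (filter_congr fun v hv => ?_) fun _ _ => rfl
  rw [Function.update_of_ne (ne_of_mem_of_not_mem hv ha)]

variable [Fintype ι] [Fintype κ]

theorem floor_add_sum_load_le_card (hw : ∀ v u, 0 ≤ w v u) (hx : ∀ u, 0 ≤ x u)
    (hLP : ∀ u, x u + ∑ v ∈ univ.filter (fun v => d u < d v), w v u * x v ≤ 1)
    {s : Finset ι} {π : ι → Finset κ}
    (hcard : ∀ v ∈ s, #(π v) = ⌊x v * Fintype.card κ⌋₊) (a : ι) :
    (⌊x a * Fintype.card κ⌋₊ : ℝ) + ∑ c, ∑ v ∈ s with d a < d v ∧ c ∈ π v, w v a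
      ≤ Fintype.card κ := by
  set K : ℝ := (Fintype.card κ : ℝ)
  have hK : 0 ≤ K := Nat.cast_nonneg _
  have hloads : ∑ c, ∑ v ∈ s with d a < d v ∧ c ∈ π v, w v a ≤ (1 - x a) * K :=
    calc ∑ c, ∑ v ∈ s with d a < d v ∧ c ∈ π v, w v a
        = ∑ v ∈ s with d a < d v, #(π v) * w v a := by
          simp_rw [← filter_filter]
          exact sum_sum_filter_mem_eq_sum_card_mul _ _ _
      _ ≤ ∑ v ∈ s with d a < d v, w v a * x v * K := by
          refine sum_le_sum fun v hv => ?_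
          rw [hcard v (mem_filter.mp hv).1, mul_comm, mul_assoc]
          exact mul_le_mul_of_nonneg_left (Nat.floor_le (mul_nonneg (hx v) hK)) (hw v a)
      _ ≤ ∑ v ∈ univ with d a < d v, w v a * x v * K :=
          sum_le_sum_of_subset_of_nonneg (filter_subset_filter _ (subset_univ s))
            fun v _ _ => mul_nonneg (mul_nonneg (hw v a) (hx v)) hK
      _ ≤ (1 - x a) * K := by
          rw [← sum_mul]
          exact mul_le_mul_of_nonneg_right (by linarith [hLP a]) hK
  have hfloor : (⌊x a * K⌋₊ : ℝ) ≤ x a * K := Nat.floor_le (mul_nonneg (hx a) hK)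
  linarith

theorem exists_isFeasibleOn (hw : ∀ v u, 0 ≤ w v u) (hx : ∀ u, 0 ≤ x u)
    (hLP : ∀ u, x u + ∑ v ∈ univ.filter (fun v => d u < d v), w v u * x v ≤ 1)
    (s : Finset ι) :
    ∃ π : ι → Finset κ,
      (∀ u ∈ s, #(π u) = ⌊x u * Fintype.card κ⌋₊) ∧ IsFeasibleOn w d s π := by
  classical
  induction s using induction_on_min_value d with
  | empty => exact ⟨fun _ => ∅, by simp, by simp [IsFeasibleOn]⟩
  | insert a s ha hmin ih =>
    obtain ⟨π, hcard, hfeas⟩ := ih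
    obtain ⟨S, hS, hSfree⟩ := exists_card_eq_forall_le_one
      (fun c => sum_nonneg fun v _ => hw v a) (floor_add_sum_load_le_card hw hx hLP hcard a)
    have hπ : ∀ v ∈ s, Function.update π a S v = π v :=
      fun v hv => Function.update_of_ne (ne_of_mem_of_not_mem hv ha) S π
    refine ⟨Function.update π a S, fun u hu => ?_, fun u hu c hc => ?_⟩
    · rcases mem_insert.mp hu with rfl | hus
      · rw [Function.update_self, hS]
      · rw [hπ u hus, hcard u hus]
    · rcases mem_insert.mp hu with rfl | hus
      · rw [sum_filter_insert_update_of_le ha le_rfl]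
        exact hSfree c (by rwa [Function.update_self] at hc)
      · rw [sum_filter_insert_update_of_le ha (hmin u hus)]
        exact hfeas u hus c (by rwa [hπ u hus] at hc)

end Greedy

theorem greedy_multicoloring_general {ι : Type*} [Fintype ι]
    (w : ι → ι → ℝ) (x : ι → ℝ) (d : ι → ℝ)
    (hw : ∀ v u, 0 ≤ w v u ∧ w v u ≤ 1)
    (hx : ∀ u, 0 ≤ x u ∧ x u ≤ 1)
    (hLP : ∀ u, x u + ∑ v ∈ Finset.univ.filter (fun v => d u < d v),
          w v u * x v ≤ 1)
    (T : ℕ) :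
    ∃ π : ι → Finset (Fin T),
      (∀ c : Fin T, ∀ u, c ∈ π u →
        ∑ v ∈ Finset.univ.filter (fun v => d u < d v ∧ c ∈ π v), w v u ≤ 1) ∧
      (∀ u, ⌊x u * T⌋ ≤ ((π u).card : ℤ)) := by
  obtain ⟨π, hcard, hfeas⟩ :=
    exists_isFeasibleOn (κ := Fin T) (fun v u => (hw v u).1) (fun u => (hx u).1) hLP univ
  refine ⟨π, fun c u hc => hfeas u (mem_univ u) c hc, fun u => ?_⟩
  rw [hcard u (mem_univ u), Fintype.card_fin,
    Int.natCast_floor_eq_floor (mul_nonneg (hx u).1 (Nat.cast_nonneg T))]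

theorem greedy_multicoloring {ι : Type*} [Fintype ι] [DecidableEq ι]
    (w : ι → ι → ℝ) (x : ι → ℝ) (d : ι → ℝ)
    (hw : ∀ v u, 0 ≤ w v u ∧ w v u ≤ 1)
    (hx : ∀ u, 0 ≤ x u ∧ x u ≤ 1)
    (hd : Function.Injective d)
    (hLP : ∀ u, x u + ∑ v ∈ Finset.univ.filter (fun v => d u < d v),
          w v u * x v ≤ 1)
    (T : ℕ) (hT : 0 < T) :
    ∃ π : ι → Finset (Fin T),
      (∀ c : Fin T, ∀ u, c ∈ π u →
        ∑ v ∈ Finset.univ.filter (fun v => d u < d v ∧ c ∈ π v), w v u ≤ 1) ∧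
      (∀ u, ⌊x u * T⌋ ≤ ((π u).card : ℤ)) :=
  greedy_multicoloring_general w x d hw hx hLP T
end

section
/- Greedy coloring failure contradiction step: With V, w, x, d, T as in the greedy coloring setup, suppose the vertices are processed in descending order of d and each vertex v already processed received a set π(v) of ⌊x(v)·T⌋ colors. If for the current vertex u the set C_bad = {c : Σ_{v : d(v)>d(u), c∈π(v)} w(v,u) > 1} satisfies |C_bad| > T − ⌊x(u)·T⌋, then x(u) + Σ_{v : d(v)>d(u)} w(v,u)·x(v) > 1. -/
theorem greedy_coloring_fail_contradiction {ι : Type*} [Fintype ι] [DecidableEq ι]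
    (w : ι → ι → ℝ) (x : ι → ℝ) (d : ι → ℝ) (T : ℕ) (hT : 0 < T)
    (hw : ∀ v u, 0 ≤ w v u ∧ w v u ≤ 1)
    (hx : ∀ v, 0 ≤ x v ∧ x v ≤ 1)
    (hd : Function.Injective d)
    (π : ι → Finset (Fin T)) (u : ι)
    (hcard : ∀ v, d u < d v → ((π v).card : ℤ) = ⌊x v * T⌋)
    (Cbad : Finset (Fin T))
    (hCbad : Cbad = Finset.univ.filter (fun c =>
      1 < ∑ v ∈ Finset.univ.filter (fun v => d u < d v ∧ c ∈ π v), w v u))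
    (hfail : (T : ℤ) - ⌊x u * T⌋ < (Cbad.card : ℤ)) :
    1 < x u + ∑ v ∈ Finset.univ.filter (fun v => d u < d v), w v u * x v := by
  set S : Finset ι := Finset.univ.filter (fun v => d u < d v) with hS
  -- step 1: card bound via double sum
  have h1 : (Cbad.card : ℝ) ≤ ∑ v ∈ S, ((π v).card : ℝ) * w v u := by
    have step : (Cbad.card : ℝ) ≤
        ∑ c ∈ Cbad, ∑ v ∈ Finset.univ.filter (fun v => d u < d v ∧ c ∈ π v), w v u := by
      rw [Finset.card_eq_sum_ones]
      push_cast
      refine Finset.sum_le_sum ?_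
      intro c hc
      rw [hCbad] at hc
      exact le_of_lt (Finset.mem_filter.mp hc).2
    have swap : ∑ c ∈ Cbad, ∑ v ∈ Finset.univ.filter (fun v => d u < d v ∧ c ∈ π v), w v u
        = ∑ v ∈ S, ((Cbad.filter (fun c => c ∈ π v)).card : ℝ) * w v u := by
      have : ∀ c, ∑ v ∈ Finset.univ.filter (fun v => d u < d v ∧ c ∈ π v), w v u
          = ∑ v ∈ S, if c ∈ π v then w v u else 0 := by
        intro c
        rw [← Finset.sum_filter, hS, Finset.filter_filter]
      simp_rw [this]
      rw [Finset.sum_comm]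
      refine Finset.sum_congr rfl ?_
      intro v hv
      rw [← Finset.sum_filter, Finset.sum_const, nsmul_eq_mul]
    rw [swap] at step
    refine step.trans (Finset.sum_le_sum ?_)
    intro v hv
    have hsub : Cbad.filter (fun c => c ∈ π v) ⊆ π v := by
      intro c hc
      exact (Finset.mem_filter.mp hc).2
    have := Finset.card_le_card hsub
    exact mul_le_mul_of_nonneg_right (by exact_mod_cast this) (hw v u).1
  -- step 2: card ≤ x v * T
  have h2 : ∑ v ∈ S, ((π v).card : ℝ) * w v u ≤ ∑ v ∈ S, (x v * T) * w v u := by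
    refine Finset.sum_le_sum ?_
    intro v hv
    have hduv : d u < d v := (Finset.mem_filter.mp hv).2
    have := hcard v hduv
    have hfl : ((π v).card : ℝ) ≤ x v * T := by
      have h := Int.floor_le (x v * (T : ℝ))
      rw [← this] at h
      push_cast at h
      exact h
    exact mul_le_mul_of_nonneg_right hfl (hw v u).1
  -- from hfail
  have h3 : (T : ℝ) - x u * T < (Cbad.card : ℝ) := by
    have hfl : (⌊x u * (T : ℝ)⌋ : ℝ) ≤ x u * T := Int.floor_le _
    have : ((T : ℤ) : ℝ) - ((⌊x u * (T : ℝ)⌋ : ℤ) : ℝ) < (Cbad.card : ℝ) := by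
      exact_mod_cast hfail
    push_cast at this
    linarith
  have h4 : ∑ v ∈ S, (x v * T) * w v u = T * ∑ v ∈ S, w v u * x v := by
    rw [Finset.mul_sum]
    exact Finset.sum_congr rfl (fun v _ => by ring)
  have hTpos : (0 : ℝ) < T := by exact_mod_cast hT
  have : (T : ℝ) * (1 - x u) < T * ∑ v ∈ S, w v u * x v := by
    calc (T : ℝ) * (1 - x u) = T - x u * T := by ring
    _ < (Cbad.card : ℝ) := h3
    _ ≤ _ := h1.trans (h2.trans (le_of_eq h4))
  have := (mul_lt_mul_iff_right₀ hTpos).mp this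
  linarith
end

section
/- Dispersion lemma (symmetric halving): Let L be a finite set of links with an injective length function d, and suppose for every e ∈ L: Σ_{e'∈L, e'≠e, d(e')≥d(e)} (ā_e(e') + ā_{e'}(e)) ≤ 1, where ā denotes symmetric nonnegative affectance values. Then there exists J ⊆ L with |J| ≥ |L|/2 such that for every e ∈ J, Σ_{e'∈J, e'≠e} ā_{e'}(e) ≤ 3. -/
theorem dispersion_halving {ι : Type*} [DecidableEq ι]
    (L : Finset ι) (d : ι → ℝ) (hd : Function.Injective d)
    (a : ι → ι → ℝ)
    (ha : ∀ e e', e ≠ e' → 0 ≤ a e' e ∧ a e' e ≤ 1)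
    (hcol : ∀ e ∈ L,
      ∑ e' ∈ L.filter (fun e' => e' ≠ e ∧ d e ≤ d e'), (a e e' + a e' e) ≤ 1) :
    ∃ J ⊆ L, (L.card : ℝ) / 2 ≤ (J.card : ℝ) ∧
      ∀ e ∈ J, ∑ e' ∈ J.erase e, a e' e ≤ 3 := by
  classical
  set R : ι → ℝ := fun e =>
    ∑ e' ∈ L.filter (fun e' => e' ≠ e ∧ d e' ≤ d e), (a e e' + a e' e) with hRdef
  have hRnonneg : ∀ e, 0 ≤ R e := by
    intro e
    apply Finset.sum_nonneg
    intro e' he'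
    simp only [Finset.mem_filter] at he'
    have h1 := (ha e' e he'.2.1).1
    have h2 := (ha e e' he'.2.1.symm).1
    linarith
  -- sum over L of R equals sum of the column sums
  have hswap : ∑ e ∈ L, R e
      = ∑ e ∈ L, ∑ e' ∈ L.filter (fun e' => e' ≠ e ∧ d e ≤ d e'), (a e e' + a e' e) := by
    simp only [hRdef, Finset.sum_filter]
    rw [Finset.sum_comm]
    refine Finset.sum_congr rfl fun x _ => Finset.sum_congr rfl fun y _ => ?_
    rcases eq_or_ne x y with h | h
    · simp [h]
    · simp [h, h.symm, add_comm]
  have htot : ∑ e ∈ L, R e ≤ (L.card : ℝ) := by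
    rw [hswap]
    calc ∑ e ∈ L, ∑ e' ∈ L.filter (fun e' => e' ≠ e ∧ d e ≤ d e'), (a e e' + a e' e)
        ≤ ∑ _e ∈ L, (1 : ℝ) := Finset.sum_le_sum hcol
      _ = (L.card : ℝ) := by simp
  set J := L.filter (fun e => R e ≤ 2) with hJdef
  set B := L.filter (fun e => ¬ R e ≤ 2) with hBdef
  have hcards : (J.card : ℝ) + (B.card : ℝ) = (L.card : ℝ) := by
    rw [hJdef, hBdef]
    exact_mod_cast Finset.card_filter_add_card_filter_not
      (p := fun e => R e ≤ 2)
  have h2B : 2 * (B.card : ℝ) ≤ ∑ e ∈ B, R e := by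
    calc 2 * (B.card : ℝ) = ∑ _e ∈ B, (2 : ℝ) := by
          rw [Finset.sum_const]; ring_nf
      _ ≤ ∑ e ∈ B, R e := by
          apply Finset.sum_le_sum
          intro i hi
          simp only [hBdef, Finset.mem_filter, not_le] at hi
          linarith [hi.2]
  have hBL : ∑ e ∈ B, R e ≤ ∑ e ∈ L, R e :=
    Finset.sum_le_sum_of_subset_of_nonneg (Finset.filter_subset _ _)
      (fun i _ _ => hRnonneg i)
  refine ⟨J, Finset.filter_subset _ _, by linarith, ?_⟩
  intro e he
  have heJ := he
  simp only [hJdef, Finset.mem_filter] at heJ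
  obtain ⟨heL, heR⟩ := heJ
  rw [← Finset.sum_filter_add_sum_filter_not (J.erase e) (fun e' => d e ≤ d e')]
  have hmemJ : ∀ e' ∈ J.erase e, e' ∈ L ∧ e' ≠ e := by
    intro e' he'
    have h1 := Finset.ne_of_mem_erase he'
    have h2 := Finset.mem_of_mem_erase he'
    simp only [hJdef, Finset.mem_filter] at h2
    exact ⟨h2.1, h1⟩
  have hb1 : ∑ e' ∈ (J.erase e).filter (fun e' => d e ≤ d e'), a e' e ≤ 1 := by
    calc ∑ e' ∈ (J.erase e).filter (fun e' => d e ≤ d e'), a e' e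
        ≤ ∑ e' ∈ (J.erase e).filter (fun e' => d e ≤ d e'), (a e e' + a e' e) := by
          apply Finset.sum_le_sum
          intro i hi
          have hi' := hmemJ i (Finset.mem_of_mem_filter i hi)
          linarith [(ha i e hi'.2).1, (ha e i hi'.2.symm).1]
      _ ≤ ∑ e' ∈ L.filter (fun e' => e' ≠ e ∧ d e ≤ d e'), (a e e' + a e' e) := by
          apply Finset.sum_le_sum_of_subset_of_nonneg
          · intro i hi
            simp only [Finset.mem_filter] at hi ⊢
            exact ⟨(hmemJ i hi.1).1, (hmemJ i hi.1).2, hi.2⟩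
          · intro i hi _
            simp only [Finset.mem_filter] at hi
            linarith [(ha i e hi.2.1).1, (ha e i hi.2.1.symm).1]
      _ ≤ 1 := hcol e heL
  have hb2 : ∑ e' ∈ (J.erase e).filter (fun e' => ¬ d e ≤ d e'), a e' e ≤ 2 := by
    calc ∑ e' ∈ (J.erase e).filter (fun e' => ¬ d e ≤ d e'), a e' e
        ≤ ∑ e' ∈ (J.erase e).filter (fun e' => ¬ d e ≤ d e'), (a e e' + a e' e) := by
          apply Finset.sum_le_sum
          intro i hi
          have hi' := hmemJ i (Finset.mem_of_mem_filter i hi)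
          linarith [(ha i e hi'.2).1, (ha e i hi'.2.symm).1]
      _ ≤ R e := by
          rw [hRdef]
          apply Finset.sum_le_sum_of_subset_of_nonneg
          · intro i hi
            simp only [Finset.mem_filter] at hi ⊢
            exact ⟨(hmemJ i hi.1).1, (hmemJ i hi.1).2, le_of_lt (not_le.mp hi.2)⟩
          · intro i hi _
            simp only [Finset.mem_filter] at hi
            linarith [(ha i e hi.2.1).1, (ha e i hi.2.1.symm).1]
      _ ≤ 2 := heR
  linarith
end
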